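/- Coherence (every preferred extension is set-stable) is an implicative property for frameworks with at least 4 assumptions: with base rules R = {contrary(C) ← A, D ← A}, witness rules R_1 = {contrary(B) ← C}, R_2 = {contrary(A) ← B}, R_3 = {contrary(C) ← D}, the framework with rule set R ∪ S has all preferred extensions set-stable for every S ⊆ {R_1, R_2, R_3} except S = {R_1, R_2}, where the unique preferred extension {D} is not set-stable. -/

import Mathlib

/-- A Bipolar ABA rule `head ← body` (body is a single assumption). -/
structure ABARule (S : Type) where
  head : S
  body : S

/-- `Derives R a b`: there is a deduction (chain of rules in `R`) from `a` to `b`. -/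
def Derives {S : Type} (R : Set (ABARule S)) : S → S → Prop :=
  Relation.ReflTransGen fun a b => (⟨b, a⟩ : ABARule S) ∈ R

/-- `Δ` attacks `β` iff the contrary of `β` is deducible from some member of `Δ`. -/
def Attacks {S : Type} (co : S → S) (R : Set (ABARule S)) (Delta : Set S) (b : S) : Prop :=
  ∃ a ∈ Delta, Derives R a (co b)

/-- `Δ` attacks set `B` iff it attacks some member of `B`. -/
def AttacksSet {S : Type} (co : S → S) (R : Set (ABARule S)) (Delta B : Set S) : Prop :=
  ∃ b ∈ B, Attacks co R Delta b

/-- `Δ` is conflict-free iff it does not attack itself. -/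
def ConflictFree {S : Type} (co : S → S) (R : Set (ABARule S)) (Delta : Set S) : Prop :=
  ¬ AttacksSet co R Delta Delta

/-- Deductive closure of `Δ` within the assumptions `asm`. -/
def Cl {S : Type} (asm : Set S) (R : Set (ABARule S)) (Delta : Set S) : Set S :=
  {a | a ∈ asm ∧ ∃ d ∈ Delta, Derives R d a}

/-- `Δ` is closed iff `Δ = Cl(Δ)`. -/
def BABAClosed {S : Type} (asm : Set S) (R : Set (ABARule S)) (Delta : Set S) : Prop :=
  Cl asm R Delta = Delta

/-- Admissibility: closed, conflict-free, and counter-attacks every closed attacker. -/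
def Admissible {S : Type} (asm : Set S) (co : S → S) (R : Set (ABARule S))
    (Delta : Set S) : Prop :=
  Delta ⊆ asm ∧ BABAClosed asm R Delta ∧ ConflictFree co R Delta ∧
    ∀ B ⊆ asm, BABAClosed asm R B → AttacksSet co R B Delta → AttacksSet co R Delta B

/-- Preferred: ⊆-maximally admissible. -/
def Preferred {S : Type} (asm : Set S) (co : S → S) (R : Set (ABARule S))
    (Delta : Set S) : Prop :=
  Admissible asm co R Delta ∧
    ∀ D', Admissible asm co R D' → Delta ⊆ D' → D' = Delta

/-- `Δ` defends `α` iff `Δ` attacks every closed set attacking `α`. -/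
def Defends {S : Type} (asm : Set S) (co : S → S) (R : Set (ABARule S))
    (Delta : Set S) (a : S) : Prop :=
  ∀ B ⊆ asm, BABAClosed asm R B → Attacks co R B a → AttacksSet co R Delta B

/-- Complete: admissible and containing exactly the assumptions it defends. -/
def CompleteExt {S : Type} (asm : Set S) (co : S → S) (R : Set (ABARule S))
    (Delta : Set S) : Prop :=
  Admissible asm co R Delta ∧ Delta = {a | a ∈ asm ∧ Defends asm co R Delta a}

/-- Set-stable: closed, conflict-free, attacking `Cl({β})` for every `β` outside. -/
def SetStable {S : Type} (asm : Set S) (co : S → S) (R : Set (ABARule S))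
    (Delta : Set S) : Prop :=
  Delta ⊆ asm ∧ BABAClosed asm R Delta ∧ ConflictFree co R Delta ∧
    ∀ b ∈ asm, b ∉ Delta → AttacksSet co R Delta (Cl asm R {b})

/-- Well-founded extension: the intersection of all complete extensions. -/
def WellFoundedExt {S : Type} (asm : Set S) (co : S → S) (R : Set (ABARule S))
    (Delta : Set S) : Prop :=
  Delta = ⋂₀ {B | CompleteExt asm co R B}

/-- Ideal: ⊆-maximal among admissible sets contained in all preferred extensions. -/
def IdealExt {S : Type} (asm : Set S) (co : S → S) (R : Set (ABARule S))
    (Delta : Set S) : Prop :=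
  (Admissible asm co R Delta ∧ ∀ B, Preferred asm co R B → Delta ⊆ B) ∧
    ∀ D', (Admissible asm co R D' ∧ ∀ B, Preferred asm co R B → D' ⊆ B) →
      Delta ⊆ D' → D' = Delta

/-- Quota rule: keep the rules accepted by at least `q` agents. -/
def QuotaAgg {S : Type} {n : ℕ} (Rs : Fin n → Set (ABARule S)) (q : ℕ) :
    Set (ABARule S) :=
  {r | ∃ N' : Finset (Fin n), q ≤ N'.card ∧ ∀ i ∈ N', r ∈ Rs i}

/-- Oligarchic rule: keep the rules accepted by all veto agents. -/
def OligAgg {S : Type} {n : ℕ} (Rs : Fin n → Set (ABARule S)) (Nv : Set (Fin n)) :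
    Set (ABARule S) :=
  {r | ∀ j ∈ Nv, r ∈ Rs j}

abbrev Sen4 := Fin 4 ⊕ Fin 4

def cmap4 : Sen4 → Sen4
  | .inl i => .inr i
  | .inr i => .inr i

def asm4 : Set Sen4 := Set.range Sum.inl

def R18 : Set (ABARule Sen4) := {⟨.inr 2, .inl 0⟩, ⟨.inl 3, .inl 0⟩}

def r18a : ABARule Sen4 := ⟨.inr 1, .inl 2⟩
def r18b : ABARule Sen4 := ⟨.inr 0, .inl 1⟩
def r18c : ABARule Sen4 := ⟨.inr 2, .inl 3⟩

/-!
Write `A, B, C, D` for `inl 0, …, inl 3`; `inr i` is the contrary of `inl i`. The only chain of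
two rules, `A → D → ¬C`, is shortcut by the rule `A → ¬C`, so every deduction is a single rule and
the attack relation can be read off the rules: `B` attacks `A` (given `r18b`), `C` attacks `B`
(given `r18a`), `A` and, given `r18c`, `D` attack `C`, and nothing attacks `D`.

From this one finds in each case a greatest admissible set, which is then the unique preferred
extension: `{A, B, D}` without `r18b`, `{B, D}` with `r18b` and `r18c`, `{B, C, D}` with `r18b`
alone, and `{D}` with `r18a` and `r18b` but not `r18c`. The first three attack every assumption
outside them; `{D}` attacks nothing, in particular not `Cl {A} = {A, D}`.
-/

section General

variable {S : Type} {asm : Set S} {co : S → S} {R : Set (ABARule S)} {Δ E : Set S}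

theorem subset_cl (hΔ : Δ ⊆ asm) : Δ ⊆ Cl asm R Δ :=
  fun a ha => ⟨hΔ ha, a, ha, .refl⟩

theorem Admissible.attacksSet_of_attacks (hΔ : Admissible asm co R Δ) {a : S} (ha : a ∈ Δ)
    {B : Set S} (hB : B ⊆ asm) (hBcl : BABAClosed asm R B) (hatt : Attacks co R B a) :
    AttacksSet co R Δ B :=
  hΔ.2.2.2 B hB hBcl ⟨a, ha, hatt⟩

theorem Admissible.setStable (hΔ : Admissible asm co R Δ)
    (hout : ∀ b ∈ asm, b ∉ Δ → Attacks co R Δ b) : SetStable asm co R Δ :=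
  ⟨hΔ.1, hΔ.2.1, hΔ.2.2.1, fun b hb hbΔ => ⟨b, subset_cl (Set.singleton_subset_iff.2 hb) rfl, hout b hb hbΔ⟩⟩

theorem preferred_iff_eq_of_isGreatest (hE : IsGreatest {Δ | Admissible asm co R Δ} E) :
    Preferred asm co R Δ ↔ Δ = E := by
  constructor
  · exact fun hΔ => (hΔ.2 E hE.1 (hE.2 hΔ.1)).symm
  · rintro rfl
    exact ⟨hE.1, fun D' hD' hsub => hsub.antisymm' (hE.2 hD')⟩

theorem Set.eq_pair_of_subset_triple {α : Type*} {a b c : α} {s : Set α} (h : s ⊆ {a, b, c})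
    (ha : a ∈ s) (hb : b ∈ s) (hc : c ∉ s) : s = {a, b} := by
  refine Set.Subset.antisymm (fun x hx => ?_) (Set.pair_subset_iff.2 ⟨ha, hb⟩)
  rcases h hx with rfl | rfl | rfl
  exacts [.inl rfl, .inr rfl, absurd hx hc]

end General

section Framework

open Sum

variable {T : Set (ABARule Sen4)}

theorem mem_rules_iff (hT : T ⊆ {r18a, r18b, r18c}) {r : ABARule Sen4} :
    r ∈ R18 ∪ T ↔ r = ⟨inr 2, inl 0⟩ ∨ r = ⟨inl 3, inl 0⟩ ∨
      (r = r18a ∧ r18a ∈ T) ∨ (r = r18b ∧ r18b ∈ T) ∨ (r = r18c ∧ r18c ∈ T) := by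
  constructor
  · rintro ((rfl | rfl) | h)
    · exact .inl rfl
    · exact .inr (.inl rfl)
    · rcases hT h with rfl | rfl | rfl <;> simp [h]
  · rintro (rfl | rfl | ⟨rfl, h⟩ | ⟨rfl, h⟩ | ⟨rfl, h⟩)
    · exact .inl (.inl rfl)
    · exact .inl (.inr rfl)
    all_goals exact .inr h

theorem rules_trans (hT : T ⊆ {r18a, r18b, r18c}) {x y z : Sen4}
    (hxy : ⟨y, x⟩ ∈ R18 ∪ T) (hyz : ⟨z, y⟩ ∈ R18 ∪ T) : (⟨z, x⟩ : ABARule Sen4) ∈ R18 ∪ T := by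
  rw [mem_rules_iff hT] at *
  simp only [r18a, r18b, r18c, ABARule.mk.injEq] at *
  aesop

theorem derives_iff (hT : T ⊆ {r18a, r18b, r18c}) {x y : Sen4} :
    Derives (R18 ∪ T) x y ↔ x = y ∨ ⟨y, x⟩ ∈ R18 ∪ T := by
  have : IsTrans Sen4 fun a b => (⟨b, a⟩ : ABARule Sen4) ∈ R18 ∪ T :=
    ⟨fun _ _ _ => rules_trans hT⟩
  rw [Derives, Relation.reflTransGen_eq_reflGen, Relation.reflGen_iff, eq_comm]

theorem attacks_inl_iff (hT : T ⊆ {r18a, r18b, r18c}) {Δ : Set Sen4} (hΔ : Δ ⊆ asm4) (j : Fin 4) :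
    Attacks cmap4 (R18 ∪ T) Δ (inl j) ↔ ∃ i, inl i ∈ Δ ∧ ⟨inr j, inl i⟩ ∈ R18 ∪ T := by
  constructor
  · rintro ⟨d, hd, hder⟩
    obtain ⟨i, rfl⟩ := hΔ hd
    exact ⟨i, hd, by simpa [derives_iff hT, cmap4] using hder⟩
  · rintro ⟨i, hi, hr⟩
    exact ⟨inl i, hi, .single hr⟩

variable (hT : T ⊆ {r18a, r18b, r18c}) {Δ : Set Sen4} (hΔ : Δ ⊆ asm4)
include hT hΔ

theorem attacks_A_iff : Attacks cmap4 (R18 ∪ T) Δ (inl 0) ↔ r18b ∈ T ∧ inl 1 ∈ Δ := by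
  rw [attacks_inl_iff hT hΔ]; simp [mem_rules_iff hT, r18a, r18b, r18c, and_comm]

theorem attacks_B_iff : Attacks cmap4 (R18 ∪ T) Δ (inl 1) ↔ r18a ∈ T ∧ inl 2 ∈ Δ := by
  rw [attacks_inl_iff hT hΔ]; simp [mem_rules_iff hT, r18a, r18b, r18c, and_comm]

theorem attacks_C_iff :
    Attacks cmap4 (R18 ∪ T) Δ (inl 2) ↔ inl 0 ∈ Δ ∨ (r18c ∈ T ∧ inl 3 ∈ Δ) := by
  rw [attacks_inl_iff hT hΔ]
  simp [mem_rules_iff hT, r18a, r18b, r18c, and_or_left, exists_or, and_comm]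

theorem not_attacks_D : ¬ Attacks cmap4 (R18 ∪ T) Δ (inl 3) := by
  rw [attacks_inl_iff hT hΔ]; simp [mem_rules_iff hT, r18a, r18b, r18c]

theorem babaClosed_of (hAD : inl 0 ∈ Δ → inl 3 ∈ Δ) : BABAClosed asm4 (R18 ∪ T) Δ := by
  refine (subset_cl hΔ).antisymm' ?_
  rintro _ ⟨⟨j, rfl⟩, d, hd, hder⟩
  obtain ⟨i, rfl⟩ := hΔ hd
  obtain rfl | ⟨rfl, rfl⟩ : i = j ∨ j = 3 ∧ i = 0 := by
    simpa [derives_iff hT, mem_rules_iff hT, r18a, r18b, r18c] using hder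
  exacts [hd, hAD hd]

end Framework

section Extensions

open Sum

variable {T : Set (ABARule Sen4)} (hT : T ⊆ {r18a, r18b, r18c}) {Δ : Set Sen4}
include hT

theorem singleton_babaClosed {i : Fin 4} (hi : i ≠ 0) :
    BABAClosed asm4 (R18 ∪ T) {inl i} :=
  babaClosed_of hT (by simp [asm4]) (by simp [hi.symm])

namespace Admissible

variable (hΔ : Admissible asm4 cmap4 (R18 ∪ T) Δ)
include hΔ

theorem A_notMem (hb : r18b ∈ T) : inl 0 ∉ Δ := by
  intro hA
  obtain ⟨_, rfl, hatt⟩ := hΔ.attacksSet_of_attacks hA (by simp [asm4])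
    (singleton_babaClosed hT (by decide)) ((attacks_A_iff hT (by simp [asm4])).2 ⟨hb, rfl⟩)
  have hC : inl 2 ∈ Δ := ((attacks_B_iff hT hΔ.1).1 hatt).2
  exact hΔ.2.2.1 ⟨inl 2, hC, (attacks_C_iff hT hΔ.1).2 (.inl hA)⟩

theorem B_mem_of_C_mem (hC : inl 2 ∈ Δ) : r18b ∈ T ∧ inl 1 ∈ Δ := by
  have hAD : ({inl 0, inl 3} : Set Sen4) ⊆ asm4 := by simp [Set.insert_subset_iff, asm4]
  obtain ⟨_, hx, hatt⟩ := hΔ.attacksSet_of_attacks hC hAD (babaClosed_of hT hAD (by simp))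
    ((attacks_C_iff hT hAD).2 (.inl (by simp)))
  rcases hx with rfl | rfl
  · exact (attacks_A_iff hT hΔ.1).1 hatt
  · exact absurd hatt (not_attacks_D hT hΔ.1)

theorem C_notMem (hc : r18c ∈ T) : inl 2 ∉ Δ := by
  intro hC
  obtain ⟨_, rfl, hatt⟩ := hΔ.attacksSet_of_attacks hC (by simp [asm4])
    (singleton_babaClosed hT (by decide)) ((attacks_C_iff hT (by simp [asm4])).2 (.inr ⟨hc, rfl⟩))
  exact not_attacks_D hT hΔ.1 hatt

theorem A_mem_of_B_mem (ha : r18a ∈ T) (hc : r18c ∉ T) (hB : inl 1 ∈ Δ) : inl 0 ∈ Δ := by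
  obtain ⟨_, rfl, hatt⟩ := hΔ.attacksSet_of_attacks hB (by simp [asm4])
    (singleton_babaClosed hT (by decide)) ((attacks_B_iff hT (by simp [asm4])).2 ⟨ha, rfl⟩)
  simpa [hc] using (attacks_C_iff hT hΔ.1).1 hatt

end Admissible

theorem isGreatest_ABD (hb : r18b ∉ T) :
    IsGreatest {Δ | Admissible asm4 cmap4 (R18 ∪ T) Δ} {inl 0, inl 1, inl 3} := by
  have hE : ({inl 0, inl 1, inl 3} : Set Sen4) ⊆ asm4 := by
    simp [Set.insert_subset_iff, asm4]
  refine ⟨⟨hE, babaClosed_of hT hE (by simp), ?_, ?_⟩, fun Δ hΔ x hx => ?_⟩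
  · rintro ⟨_, hx | hx | hx, hatt⟩ <;> subst hx
    · exact hb ((attacks_A_iff hT hE).1 hatt).1
    · simpa using ((attacks_B_iff hT hE).1 hatt).2
    · exact not_attacks_D hT hE hatt
  · rintro B hB - ⟨_, hx | hx | hx, hatt⟩ <;> subst hx
    · exact absurd ((attacks_A_iff hT hB).1 hatt).1 hb
    · exact ⟨inl 2, ((attacks_B_iff hT hB).1 hatt).2, (attacks_C_iff hT hE).2 (.inl (by simp))⟩
    · exact absurd hatt (not_attacks_D hT hB)
  · have hC : inl 2 ∉ Δ := fun hC => hb (hΔ.B_mem_of_C_mem hT hC).1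
    obtain ⟨i, rfl⟩ := hΔ.1 hx
    fin_cases i <;> simp_all

theorem isGreatest_BCD (ha : r18a ∉ T) (hb : r18b ∈ T) (hc : r18c ∉ T) :
    IsGreatest {Δ | Admissible asm4 cmap4 (R18 ∪ T) Δ} {inl 1, inl 2, inl 3} := by
  have hE : ({inl 1, inl 2, inl 3} : Set Sen4) ⊆ asm4 := by
    simp [Set.insert_subset_iff, asm4]
  refine ⟨⟨hE, babaClosed_of hT hE (by simp), ?_, ?_⟩, fun Δ hΔ x hx => ?_⟩
  · rintro ⟨_, hx | hx | hx, hatt⟩ <;> subst hx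
    · exact ha ((attacks_B_iff hT hE).1 hatt).1
    · simpa [hc] using (attacks_C_iff hT hE).1 hatt
    · exact not_attacks_D hT hE hatt
  · rintro B hB - ⟨_, hx | hx | hx, hatt⟩ <;> subst hx
    · exact absurd ((attacks_B_iff hT hB).1 hatt).1 ha
    · have hA : inl 0 ∈ B := by simpa [hc] using (attacks_C_iff hT hB).1 hatt
      exact ⟨inl 0, hA, (attacks_A_iff hT hE).2 ⟨hb, by simp⟩⟩
    · exact absurd hatt (not_attacks_D hT hB)
  · have hA : inl 0 ∉ Δ := hΔ.A_notMem hT hb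
    obtain ⟨i, rfl⟩ := hΔ.1 hx
    fin_cases i <;> simp_all

theorem isGreatest_BD (hb : r18b ∈ T) (hc : r18c ∈ T) :
    IsGreatest {Δ | Admissible asm4 cmap4 (R18 ∪ T) Δ} {inl 1, inl 3} := by
  have hE : ({inl 1, inl 3} : Set Sen4) ⊆ asm4 := by
    simp [Set.insert_subset_iff, asm4]
  refine ⟨⟨hE, babaClosed_of hT hE (by simp), ?_, ?_⟩, fun Δ hΔ x hx => ?_⟩
  · rintro ⟨_, hx | hx, hatt⟩ <;> subst hx
    · simpa using ((attacks_B_iff hT hE).1 hatt).2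
    · exact not_attacks_D hT hE hatt
  · rintro B hB - ⟨_, hx | hx, hatt⟩ <;> subst hx
    · exact ⟨inl 2, ((attacks_B_iff hT hB).1 hatt).2, (attacks_C_iff hT hE).2 (.inr ⟨hc, by simp⟩)⟩
    · exact absurd hatt (not_attacks_D hT hB)
  · have hA : inl 0 ∉ Δ := hΔ.A_notMem hT hb
    have hC : inl 2 ∉ Δ := hΔ.C_notMem hT hc
    obtain ⟨i, rfl⟩ := hΔ.1 hx
    fin_cases i <;> simp_all

theorem isGreatest_D (ha : r18a ∈ T) (hb : r18b ∈ T) (hc : r18c ∉ T) :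
    IsGreatest {Δ | Admissible asm4 cmap4 (R18 ∪ T) Δ} {inl 3} := by
  have hE : ({inl 3} : Set Sen4) ⊆ asm4 := by simp [asm4]
  refine ⟨⟨hE, singleton_babaClosed hT (by decide), ?_, ?_⟩, fun Δ hΔ x hx => ?_⟩
  · rintro ⟨_, rfl, hatt⟩
    exact not_attacks_D hT hE hatt
  · rintro B hB - ⟨_, rfl, hatt⟩
    exact absurd hatt (not_attacks_D hT hB)
  · have hA : inl 0 ∉ Δ := hΔ.A_notMem hT hb
    have hB : inl 1 ∉ Δ := fun hB => hA (hΔ.A_mem_of_B_mem hT ha hc hB)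
    have hC : inl 2 ∉ Δ := fun hC => hB (hΔ.B_mem_of_C_mem hT hC).2
    obtain ⟨i, rfl⟩ := hΔ.1 hx
    fin_cases i <;> simp_all

theorem setStable_ABD (hb : r18b ∉ T) :
    SetStable asm4 cmap4 (R18 ∪ T) {inl 0, inl 1, inl 3} := by
  have hE := (isGreatest_ABD hT hb).1
  refine hE.setStable fun x hx hxE => ?_
  obtain rfl : x = inl 2 := by
    obtain ⟨i, rfl⟩ := hx
    fin_cases i <;> simp_all
  exact (attacks_C_iff hT hE.1).2 (.inl (by simp))

theorem setStable_BCD (ha : r18a ∉ T) (hb : r18b ∈ T) (hc : r18c ∉ T) :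
    SetStable asm4 cmap4 (R18 ∪ T) {inl 1, inl 2, inl 3} := by
  have hE := (isGreatest_BCD hT ha hb hc).1
  refine hE.setStable fun x hx hxE => ?_
  obtain rfl : x = inl 0 := by
    obtain ⟨i, rfl⟩ := hx
    fin_cases i <;> simp_all
  exact (attacks_A_iff hT hE.1).2 ⟨hb, by simp⟩

theorem setStable_BD (hb : r18b ∈ T) (hc : r18c ∈ T) :
    SetStable asm4 cmap4 (R18 ∪ T) {inl 1, inl 3} := by
  have hE := (isGreatest_BD hT hb hc).1
  refine hE.setStable fun x hx hxE => ?_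
  obtain rfl | rfl : x = inl 0 ∨ x = inl 2 := by
    obtain ⟨i, rfl⟩ := hx
    fin_cases i <;> simp_all
  · exact (attacks_A_iff hT hE.1).2 ⟨hb, by simp⟩
  · exact (attacks_C_iff hT hE.1).2 (.inr ⟨hc, by simp⟩)

theorem not_setStable_D (hc : r18c ∉ T) : ¬ SetStable asm4 cmap4 (R18 ∪ T) {inl 3} := by
  have hD : ({inl 3} : Set Sen4) ⊆ asm4 := by simp [asm4]
  rintro ⟨-, -, -, hss⟩
  obtain ⟨_, ⟨⟨j, rfl⟩, -⟩, hatt⟩ := hss (inl 0) ⟨0, rfl⟩ (by simp)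
  fin_cases j
  · simpa using ((attacks_A_iff hT hD).1 hatt).2
  · simpa using ((attacks_B_iff hT hD).1 hatt).2
  · simpa [hc] using (attacks_C_iff hT hD).1 hatt
  · exact not_attacks_D hT hD hatt

end Extensions

theorem coherence_implicative :
    ∀ T ⊆ ({r18a, r18b, r18c} : Set (ABARule Sen4)),
      (T ≠ {r18a, r18b} →
        ∀ Delta, Preferred asm4 cmap4 (R18 ∪ T) Delta →
          SetStable asm4 cmap4 (R18 ∪ T) Delta) ∧
      (T = {r18a, r18b} →
        Preferred asm4 cmap4 (R18 ∪ T) {Sum.inl 3} ∧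
        (∀ Delta, Preferred asm4 cmap4 (R18 ∪ T) Delta → Delta = {Sum.inl 3}) ∧
        ¬ SetStable asm4 cmap4 (R18 ∪ T) {Sum.inl 3}) := by
  intro T hT
  refine ⟨fun hne Δ hΔ => ?_, ?_⟩
  · obtain ⟨E, hE, hss⟩ : ∃ E, IsGreatest {Δ | Admissible asm4 cmap4 (R18 ∪ T) Δ} E ∧
        SetStable asm4 cmap4 (R18 ∪ T) E := by
      by_cases hb : r18b ∈ T
      · by_cases hc : r18c ∈ T
        · exact ⟨_, isGreatest_BD hT hb hc, setStable_BD hT hb hc⟩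
        have ha : r18a ∉ T := fun ha => hne (Set.eq_pair_of_subset_triple hT ha hb hc)
        exact ⟨_, isGreatest_BCD hT ha hb hc, setStable_BCD hT ha hb hc⟩
      · exact ⟨_, isGreatest_ABD hT hb, setStable_ABD hT hb⟩
    rwa [(preferred_iff_eq_of_isGreatest hE).1 hΔ]
  · rintro rfl
    have hc : r18c ∉ ({r18a, r18b} : Set (ABARule Sen4)) := by simp [r18a, r18b, r18c]
    have hE := isGreatest_D hT (by simp) (by simp) hc
    exact ⟨(preferred_iff_eq_of_isGreatest hE).2 rfl, fun Δ => (preferred_iff_eq_of_isGreatest hE).1,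
      not_setStable_D hT hc⟩
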